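/- arXiv:1305.2805 — 2 statements merged into one kernel-verified Lean document; each statement's English description precedes it below -/
import Mathlib

section
/- For Λ in the Gårding cone Γ_k with 1 ≤ k ≤ n-1, every H_j(Λ) with 0 ≤ j ≤ k is positive, and moreover H_j(Λ) ≥ H_k(Λ)^{j/k} for 1 ≤ j ≤ k. -/
open Finset

/-- The `k`-th elementary symmetric function of `Λ ∈ ℝ^m`. -/
noncomputable def esymmF {m : ℕ} (Λ : Fin m → ℝ) (k : ℕ) : ℝ :=
  ∑ s ∈ Finset.univ.powersetCard k, ∏ i ∈ s, Λ i

/-- The normalized `k`-th elementary symmetric function `H_k = σ_k / C(m,k)`. -/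
noncomputable def Hnorm {m : ℕ} (Λ : Fin m → ℝ) (k : ℕ) : ℝ :=
  esymmF Λ k / (m.choose k)

/-- The Gårding cone `Γ_k = {Λ : σ_j(Λ) > 0 for all j ≤ k}`. -/
def GardingCone (m k : ℕ) : Set (Fin m → ℝ) :=
  {Λ | ∀ j, 1 ≤ j → j ≤ k → 0 < esymmF Λ j}
open Polynomial
open scoped Nat

lemma esymmF_eq {m : ℕ} (Λ : Fin m → ℝ) (k : ℕ) :
    esymmF Λ k = ((Finset.univ.val.map Λ : Multiset ℝ)).esymm k := by
  rw [esymmF, Finset.esymm_map_val]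

lemma esymmF_top {d : ℕ} (Λ : Fin d → ℝ) : esymmF Λ d = ∏ t, Λ t := by
  have h : (univ : Finset (Fin d)).card = d := by simp
  have h2 := Finset.powersetCard_self (univ : Finset (Fin d))
  rw [h] at h2
  rw [esymmF, h2, Finset.sum_singleton]

lemma newton_top (i : ℕ) (Λ : Fin (i + 2) → ℝ) :
    2 * (i + 2 : ℝ) * (esymmF Λ (i + 2) * esymmF Λ i) ≤ (i + 1 : ℝ) * esymmF Λ (i + 1) ^ 2 := by
  classical
  set P : Fin (i + 2) → ℝ := fun t => ∏ l ∈ univ.erase t, Λ l with hP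
  set S : ℝ := ∑ t, P t with hS
  set T : ℝ := ∑ t, P t ^ 2 with hT
  set p : ℝ[X] := ∏ t, (X + C (Λ t)) with hp
  have hcard : (univ : Finset (Fin (i + 2))).card = i + 2 := by simp
  -- coefficient computations
  have hc1 : p.coeff 1 = esymmF Λ (i + 1) := by
    have h := Finset.prod_X_add_C_coeff (univ : Finset (Fin (i+2))) Λ (k := 1) (by simp)
    rw [hcard] at h
    norm_num at h
    rw [hp, h, esymmF]
  have hc2 : p.coeff 2 = esymmF Λ i := by
    have h := Finset.prod_X_add_C_coeff (univ : Finset (Fin (i+2))) Λ (k := 2) (by simp)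
    rw [hcard] at h
    norm_num at h
    rw [hp, h, esymmF]
  -- derivative of p
  have hd1 : derivative p = ∑ t, ∏ l ∈ univ.erase t, (X + C (Λ l)) := by
    rw [hp, Finset.prod_eq_multiset_prod, derivative_prod]
    rw [Finset.sum_eq_multiset_sum]
    congr 1
    apply Multiset.map_congr rfl
    intro t _
    rw [derivative_X_add_C, mul_one, Finset.prod_eq_multiset_prod, Finset.erase_val]
  have hB : esymmF Λ (i + 1) = S := by
    have h0 : (derivative p).coeff 0 = p.coeff 1 * 1 := by
      rw [coeff_derivative]; norm_num
    rw [coeff_zero_eq_eval_zero, hd1, hc1, mul_one] at h0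
    rw [← h0, hS, hP]
    simp [eval_finset_sum, eval_prod]
  -- second derivative
  have hd2 : derivative (derivative p) =
      ∑ t, ∑ l ∈ univ.erase t, ∏ a ∈ (univ.erase t).erase l, (X + C (Λ a)) := by
    rw [hd1, derivative_sum]
    refine Finset.sum_congr rfl fun t _ => ?_
    rw [Finset.prod_eq_multiset_prod, derivative_prod, Finset.sum_eq_multiset_sum]
    congr 1
    apply Multiset.map_congr rfl
    intro l _
    rw [derivative_X_add_C, mul_one, Finset.prod_eq_multiset_prod]
    simp [Finset.erase_val]
  have hC : 2 * esymmF Λ i = ∑ t, ∑ l ∈ univ.erase t, ∏ a ∈ (univ.erase t).erase l, Λ a := by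
    have h0 : (derivative (derivative p)).coeff 0 = esymmF Λ i * 2 := by
      rw [coeff_derivative, coeff_derivative, hc2]; norm_num
    rw [coeff_zero_eq_eval_zero, hd2] at h0
    simp only [eval_finset_sum, eval_prod, eval_add, eval_X, eval_C, zero_add] at h0
    linarith [h0]
  have hA : esymmF Λ (i + 2) = ∏ t, Λ t := esymmF_top Λ
  have hkey : ∀ t : Fin (i + 2), ∀ l ∈ univ.erase t,
      (∏ a, Λ a) * ∏ a ∈ (univ.erase t).erase l, Λ a = P t * P l := by
    intro t l hl
    have hlt : l ≠ t := by simpa using (Finset.mem_erase.mp hl).1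
    have h1 : (∏ a, Λ a) = Λ t * P t := (Finset.mul_prod_erase univ Λ (mem_univ t)).symm
    have h2 : P l = Λ t * ∏ a ∈ (univ.erase l).erase t, Λ a :=
      (Finset.mul_prod_erase _ Λ (show t ∈ univ.erase l by simp [Ne.symm hlt])).symm
    have hec : (univ.erase l).erase t = (univ.erase t).erase l := by
      ext a; simp only [Finset.mem_erase, Finset.mem_univ, and_true]; tauto
    rw [hec] at h2
    rw [h1, h2, hP]; ring
  have hsum : ∑ t, ∑ l ∈ univ.erase t, P t * P l = S ^ 2 - T := by
    have hin : ∀ t : Fin (i + 2), ∑ l ∈ univ.erase t, P l = S - P t := fun t =>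
      Finset.sum_erase_eq_sub (mem_univ t)
    have : ∑ t, ∑ l ∈ univ.erase t, P t * P l = ∑ t, (P t * S - P t ^ 2) := by
      refine Finset.sum_congr rfl fun t _ => ?_
      rw [← Finset.mul_sum, hin t]; ring
    rw [this, Finset.sum_sub_distrib, ← Finset.sum_mul, hS, hT]; ring
  have hmain : 2 * (esymmF Λ (i + 2) * esymmF Λ i) = S ^ 2 - T := by
    have e1 : 2 * (esymmF Λ (i + 2) * esymmF Λ i) = (∏ t, Λ t) * (2 * esymmF Λ i) := by
      rw [hA]; ring
    rw [e1]
    calc (∏ t, Λ t) * (2 * esymmF Λ i)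
        = ∑ t, ∑ l ∈ univ.erase t, (∏ a, Λ a) * ∏ a ∈ (univ.erase t).erase l, Λ a := by
          rw [hC, Finset.mul_sum]
          exact Finset.sum_congr rfl fun t _ => Finset.mul_sum _ _ _
      _ = ∑ t, ∑ l ∈ univ.erase t, P t * P l :=
          Finset.sum_congr rfl fun t _ => Finset.sum_congr rfl (hkey t)
      _ = S ^ 2 - T := hsum
  have hcs : S ^ 2 ≤ (i + 2 : ℝ) * T := by
    have h := sq_sum_le_card_mul_sum_sq (s := (univ : Finset (Fin (i + 2)))) (f := P)
    rw [hcard] at h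
    push_cast at h ⊢
    convert h using 2 <;> simp [hS, hT]
  rw [hB]
  nlinarith [hmain, hcs]

lemma newton_top' (d : ℕ) (hd : 2 ≤ d) (Λ : Fin d → ℝ) :
    2 * (d : ℝ) * (esymmF Λ d * esymmF Λ (d - 2)) ≤ ((d : ℝ) - 1) * esymmF Λ (d - 1) ^ 2 := by
  obtain ⟨i, rfl⟩ : ∃ i, d = i + 2 := ⟨d - 2, by omega⟩
  have h := newton_top i Λ
  rw [show i + 2 - 2 = i from by omega, show i + 2 - 1 = i + 1 from by omega]
  have e1 : ((i : ℝ) + 2) = ((i + 2 : ℕ) : ℝ) := by push_cast; ring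
  have e2 : ((i : ℝ) + 1) = ((i + 2 : ℕ) : ℝ) - 1 := by push_cast; ring
  rw [e1, e2] at h
  exact h

lemma newton_top_multiset (i : ℕ) (s : Multiset ℝ) (hs : Multiset.card s = i + 2) :
    2 * (i + 2 : ℝ) * (s.esymm (i + 2) * s.esymm i) ≤ (i + 1 : ℝ) * s.esymm (i + 1) ^ 2 := by
  classical
  set l := s.toList with hl0
  have hl : l.length = i + 2 := by rw [hl0, Multiset.length_toList, hs]
  have hsl : (Finset.univ.val.map l.get : Multiset ℝ) = s := by
    rw [Fin.univ_val_map, List.ofFn_get]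
    exact Multiset.coe_toList s
  have heq : ∀ r, esymmF l.get r = s.esymm r := by
    intro r
    rw [esymmF_eq, hsl]
  have h := newton_top' l.length (by omega) l.get
  rw [heq, heq, heq, hl] at h
  rw [show i + 2 - 2 = i from by omega, show i + 2 - 1 = i + 1 from by omega] at h
  have e1 : ((i + 2 : ℕ) : ℝ) = (i + 2 : ℝ) := by push_cast; ring
  rw [e1] at h
  calc 2 * (i + 2 : ℝ) * (s.esymm (i + 2) * s.esymm i)
      ≤ ((i + 2 : ℝ) - 1) * s.esymm (i + 1) ^ 2 := h
    _ = (i + 1 : ℝ) * s.esymm (i + 1) ^ 2 := by ring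

lemma iter_deriv_roots (p : Polynomial ℝ) (hroots : Multiset.card p.roots = p.natDegree)
    (c : ℕ) (hc : c ≤ p.natDegree) :
    (derivative^[c] p).natDegree = p.natDegree - c ∧
      Multiset.card (derivative^[c] p).roots = p.natDegree - c := by
  induction c with
  | zero => simpa using hroots
  | succ c ih =>
    obtain ⟨hdeg, hrt⟩ := ih (by omega)
    have h1 := Polynomial.card_roots_le_derivative (derivative^[c] p)
    have h2 := Polynomial.card_roots' (derivative (derivative^[c] p))
    have h3 := Polynomial.natDegree_derivative_le (derivative^[c] p)
    rw [Function.iterate_succ_apply']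
    constructor <;> omega

set_option maxHeartbeats 1000000 in
lemma hnorm_newton {m : ℕ} (Λ : Fin m → ℝ) (j : ℕ) (hj : 1 ≤ j) (hjm : j + 1 ≤ m) :
    Hnorm Λ (j - 1) * Hnorm Λ (j + 1) ≤ Hnorm Λ j ^ 2 := by
  classical
  obtain ⟨i, c, rfl, rfl⟩ : ∃ i c, j = i + 1 ∧ m = i + c + 2 :=
    ⟨j - 1, m - j - 1, by omega, by omega⟩
  rw [show i + 1 - 1 = i from by omega]
  set p : Polynomial ℝ := ∏ t : Fin (i + c + 2), (X + C (Λ t)) with hp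
  have hcard : (univ : Finset (Fin (i + c + 2))).card = i + c + 2 := by simp
  have hpd : p.natDegree = i + c + 2 := by
    rw [hp, natDegree_prod_of_monic _ _ (fun t _ => monic_X_add_C (Λ t))]
    simp [natDegree_X_add_C]
  have hform : p = ((univ.val.map fun t => -Λ t).map fun a => X - C a).prod := by
    rw [hp, Finset.prod_eq_multiset_prod, Multiset.map_map]
    congr 1
    apply Multiset.map_congr rfl
    intro t _
    simp [sub_neg_eq_add]
  have hpr : Multiset.card p.roots = i + c + 2 := by
    rw [hform, roots_multiset_prod_X_sub_C]
    simp
  obtain ⟨hqd, hqr⟩ := iter_deriv_roots p (by rw [hpd, hpr]) c (by omega)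
  rw [hpd] at hqd hqr
  rw [show i + c + 2 - c = i + 2 from by omega] at hqd hqr
  set q : Polynomial ℝ := derivative^[c] p with hq
  -- coefficients of q via iterated derivative and Vieta on p
  have way1 : ∀ r, r + c ≤ i + c + 2 →
      q.coeff r = ((r + c).descFactorial c : ℝ) * esymmF Λ (i + 2 - r) := by
    intro r hr
    rw [hq, Polynomial.coeff_iterate_derivative, nsmul_eq_mul]
    congr 1
    have h := Finset.prod_X_add_C_coeff (univ : Finset (Fin (i + c + 2))) Λ
      (k := r + c) (by rw [hcard]; omega)
    rw [hcard] at h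
    rw [hp, h, esymmF]
    congr 2
    omega
  -- coefficients of q via Vieta on roots of q
  have hqr' : Multiset.card q.roots = q.natDegree := by rw [hqd, hqr]
  have way2 : ∀ r, r ≤ i + 2 →
      q.coeff r = q.leadingCoeff * (-1) ^ (i + 2 - r) * q.roots.esymm (i + 2 - r) := by
    intro r hr
    have h := Polynomial.coeff_eq_esymm_roots_of_card hqr' (k := r) (by omega)
    rwa [hqd] at h
  have key := newton_top_multiset i q.roots hqr
  -- inequality on coefficients of q
  have hA : 2 * (i + 2 : ℝ) * (q.coeff 0 * q.coeff 2) ≤ (i + 1 : ℝ) * q.coeff 1 ^ 2 := by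
    rw [way2 0 (by omega), way2 1 (by omega), way2 2 (by omega)]
    rw [show i + 2 - 0 = i + 2 from by omega, show i + 2 - 1 = i + 1 from by omega,
      show i + 2 - 2 = i from by omega]
    set L := q.leadingCoeff with hL
    set ε := (-1 : ℝ) ^ i with hε
    have hsq : ε * ε = 1 := by
      rw [hε, ← pow_add, ← two_mul, pow_mul]
      norm_num
    have h2 : (-1 : ℝ) ^ (i + 2) = ε := by rw [hε, pow_add]; norm_num
    have h1 : (-1 : ℝ) ^ (i + 1) = ε * (-1) := by rw [hε, pow_succ]
    rw [h1, h2]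
    have key2 := mul_le_mul_of_nonneg_left key (sq_nonneg (L * ε))
    nlinarith [key2, hsq]
  rw [way1 0 (by omega), way1 1 (by omega), way1 2 (by omega)] at hA
  rw [show i + 2 - 0 = i + 2 from by omega, show i + 2 - 1 = i + 1 from by omega,
    show i + 2 - 2 = i from by omega] at hA
  rw [show (0 + c) = c from by omega, show (1 + c) = c + 1 from by omega,
    show (2 + c) = c + 2 from by omega] at hA
  set σ0 := esymmF Λ i with hσ0
  set σ1 := esymmF Λ (i + 1) with hσ1
  set σ2 := esymmF Λ (i + 2) with hσ2
  set A0 := (c.descFactorial c : ℝ) with hA0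
  set A1 := ((c + 1).descFactorial c : ℝ) with hA1
  set A2 := ((c + 2).descFactorial c : ℝ) with hA2
  -- descFactorial values
  have ha0 : A0 = ((c)! : ℝ) := by
    rw [hA0, Nat.descFactorial_self]
  have ha1 : A1 = (((c + 1))! : ℝ) := by
    have h := Nat.factorial_mul_descFactorial (show c ≤ c + 1 by omega)
    rw [show c + 1 - c = 1 from by omega] at h
    norm_num [Nat.factorial] at h
    rw [hA1]
    exact_mod_cast congrArg (Nat.cast (R := ℝ)) h
  have ha2 : 2 * A2 = (((c + 2))! : ℝ) := by
    have h := Nat.factorial_mul_descFactorial (show c ≤ c + 2 by omega)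
    rw [show c + 2 - c = 2 from by omega] at h
    norm_num [Nat.factorial] at h
    rw [hA2]
    exact_mod_cast congrArg (Nat.cast (R := ℝ)) h
  -- choose values
  have hc0 : ((i + c + 2).choose i : ℝ) * (((i))! * (((c + 2))!)) = (((i + c + 2))! : ℝ) := by
    have h := Nat.choose_mul_factorial_mul_factorial (show i ≤ i + c + 2 by omega)
    rw [show i + c + 2 - i = c + 2 from by omega] at h
    push_cast [← h]; ring
  have hc1 : ((i + c + 2).choose (i + 1) : ℝ) * ((((i + 1)))! * (((c + 1))!)) =
      (((i + c + 2))! : ℝ) := by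
    have h := Nat.choose_mul_factorial_mul_factorial (show i + 1 ≤ i + c + 2 by omega)
    rw [show i + c + 2 - (i + 1) = c + 1 from by omega] at h
    push_cast [← h]; ring
  have hc2 : ((i + c + 2).choose (i + 2) : ℝ) * ((((i + 2)))! * (((c))!)) =
      (((i + c + 2))! : ℝ) := by
    have h := Nat.choose_mul_factorial_mul_factorial (show i + 2 ≤ i + c + 2 by omega)
    rw [show i + c + 2 - (i + 2) = c from by omega] at h
    push_cast [← h]; ring
  set C0 := ((i + c + 2).choose i : ℝ) with hC0
  set C1 := ((i + c + 2).choose (i + 1) : ℝ) with hC1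
  set C2 := ((i + c + 2).choose (i + 2) : ℝ) with hC2
  have hp0 : (0 : ℝ) < C0 := by
    rw [hC0]; exact_mod_cast Nat.choose_pos (show i ≤ i + c + 2 by omega)
  have hp1 : (0 : ℝ) < C1 := by
    rw [hC1]; exact_mod_cast Nat.choose_pos (show i + 1 ≤ i + c + 2 by omega)
  have hp2 : (0 : ℝ) < C2 := by
    rw [hC2]; exact_mod_cast Nat.choose_pos (show i + 2 ≤ i + c + 2 by omega)
  have hfpos : ∀ a : ℕ, (0 : ℝ) < ((a)! : ℝ) := fun a => by
    exact_mod_cast Nat.factorial_pos a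
  have hβ : (0 : ℝ) < ((i : ℝ) + 1) * A1 ^ 2 := by
    rw [ha1]; positivity
  -- the combinatorial identity
  have NId : ((i : ℝ) + 1) * A1 ^ 2 * C1 ^ 2 =
      2 * ((i : ℝ) + 2) * (A0 * A2) * (C0 * C2) := by
    have f0 : C0 = (((i + c + 2))! : ℝ) / (((i))! * (((c + 2))!)) :=
      (eq_div_iff (by positivity)).mpr hc0
    have f1 : C1 = (((i + c + 2))! : ℝ) / ((((i + 1)))! * (((c + 1))!)) :=
      (eq_div_iff (by positivity)).mpr hc1
    have f2 : C2 = (((i + c + 2))! : ℝ) / ((((i + 2)))! * (((c))!)) :=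
      (eq_div_iff (by positivity)).mpr hc2
    have g2 : A2 = (((c + 2))! : ℝ) / 2 := by rw [← ha2]; ring
    have e1 : (((i + 1))! : ℝ) = ((i : ℝ) + 1) * ((i)! : ℝ) := by
      push_cast [Nat.factorial_succ]; ring
    have e2 : (((i + 2))! : ℝ) = ((i : ℝ) + 2) * (((i + 1))! : ℝ) := by
      push_cast [Nat.factorial_succ]; ring
    have e3 : (((c + 1))! : ℝ) = ((c : ℝ) + 1) * ((c)! : ℝ) := by
      push_cast [Nat.factorial_succ]; ring
    have e4 : (((c + 2))! : ℝ) = ((c : ℝ) + 2) * (((c + 1))! : ℝ) := by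
      push_cast [Nat.factorial_succ]; ring
    rw [f0, f1, f2, ha0, ha1, g2, e2, e4, e1, e3]
    have h1 : ((i)! : ℝ) ≠ 0 := ne_of_gt (hfpos i)
    have h2 : ((c)! : ℝ) ≠ 0 := ne_of_gt (hfpos c)
    have h3 : ((i : ℝ) + 1) ≠ 0 := by positivity
    have h4 : ((i : ℝ) + 2) ≠ 0 := by positivity
    have h5 : ((c : ℝ) + 1) ≠ 0 := by positivity
    have h6 : ((c : ℝ) + 2) ≠ 0 := by positivity
    field_simp
  -- unfold Hnorm and conclude
  rw [Hnorm, Hnorm, Hnorm, ← hσ0, ← hσ1, ← hσ2]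
  rw [show ((i + c + 2 : ℕ).choose i : ℝ) = C0 from rfl,
    show ((i + c + 2 : ℕ).choose (i + 1) : ℝ) = C1 from rfl,
    show ((i + c + 2 : ℕ).choose (i + 2) : ℝ) = C2 from rfl]
  rw [div_mul_div_comm, div_pow, div_le_div_iff₀ (by positivity) (by positivity)]
  have final : σ0 * σ2 * C1 ^ 2 * (((i : ℝ) + 1) * A1 ^ 2) ≤
      σ1 ^ 2 * (C0 * C2) * (((i : ℝ) + 1) * A1 ^ 2) := by
    calc σ0 * σ2 * C1 ^ 2 * (((i : ℝ) + 1) * A1 ^ 2)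
        = (2 * ((i : ℝ) + 2) * (A0 * σ2 * (A2 * σ0))) * (C0 * C2) := by
          linear_combination (σ0 * σ2) * NId
      _ ≤ (((i : ℝ) + 1) * (A1 * σ1) ^ 2) * (C0 * C2) := by
          apply mul_le_mul_of_nonneg_right _ (by positivity)
          convert hA using 2 <;> push_cast <;> ring
      _ = σ1 ^ 2 * (C0 * C2) * (((i : ℝ) + 1) * A1 ^ 2) := by ring
  exact le_of_mul_le_mul_right final hβ

lemma Hnorm_zero {m : ℕ} (Λ : Fin m → ℝ) : Hnorm Λ 0 = 1 := by
  rw [Hnorm, esymmF]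
  simp

theorem garding_Hk_pos_and_maclaurin (n k : ℕ) (hk : 1 ≤ k) (hkn : k ≤ n - 1)
    (Λ : Fin (n - 1) → ℝ) (hΛ : Λ ∈ GardingCone (n - 1) k) :
    (∀ j, j ≤ k → 0 < Hnorm Λ j) ∧
      ∀ j, 1 ≤ j → j ≤ k → Hnorm Λ j ≥ (Hnorm Λ k) ^ ((j : ℝ) / k) := by
  have hpos : ∀ j, j ≤ k → 0 < Hnorm Λ j := by
    intro j hj
    rcases Nat.eq_zero_or_pos j with h0 | h1
    · rw [h0, Hnorm_zero]; norm_num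
    · rw [Hnorm]
      apply div_pos (hΛ j h1 hj)
      exact_mod_cast Nat.choose_pos (le_trans hj hkn)
  refine ⟨hpos, ?_⟩
  have hQ : ∀ j, j + 1 ≤ k → Hnorm Λ (j + 1) ^ j ≤ Hnorm Λ j ^ (j + 1) := by
    intro j
    induction j with
    | zero => intro _; simp [Hnorm_zero]
    | succ j ih =>
      intro hjk
      have ih' := ih (by omega)
      have hN := hnorm_newton Λ (j + 1) (by omega) (show j + 1 + 1 ≤ n - 1 by omega)
      rw [show j + 1 - 1 = j from by omega] at hN
      have p0 : 0 < Hnorm Λ j := hpos _ (by omega)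
      have p1 : 0 < Hnorm Λ (j + 1) := hpos _ (by omega)
      have p2 : 0 < Hnorm Λ (j + 1 + 1) := hpos _ (by omega)
      have hNp : (Hnorm Λ j * Hnorm Λ (j + 1 + 1)) ^ (j + 1) ≤
          (Hnorm Λ (j + 1) ^ 2) ^ (j + 1) :=
        pow_le_pow_left₀ (by positivity) hN (j + 1)
      have h1 : Hnorm Λ (j + 1) ^ j * Hnorm Λ (j + 1 + 1) ^ (j + 1)
          ≤ Hnorm Λ j ^ (j + 1) * Hnorm Λ (j + 1 + 1) ^ (j + 1) :=
        mul_le_mul_of_nonneg_right ih' (by positivity)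
      have h2 : Hnorm Λ j ^ (j + 1) * Hnorm Λ (j + 1 + 1) ^ (j + 1)
          ≤ Hnorm Λ (j + 1) ^ (2 * (j + 1)) := by
        calc Hnorm Λ j ^ (j + 1) * Hnorm Λ (j + 1 + 1) ^ (j + 1)
            = (Hnorm Λ j * Hnorm Λ (j + 1 + 1)) ^ (j + 1) := (mul_pow _ _ _).symm
          _ ≤ (Hnorm Λ (j + 1) ^ 2) ^ (j + 1) := hNp
          _ = Hnorm Λ (j + 1) ^ (2 * (j + 1)) := by rw [← pow_mul]
      have h3 : Hnorm Λ (j + 1) ^ j * Hnorm Λ (j + 1 + 1) ^ (j + 1)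
          ≤ Hnorm Λ (j + 1) ^ j * Hnorm Λ (j + 1) ^ (j + 1 + 1) := by
        calc Hnorm Λ (j + 1) ^ j * Hnorm Λ (j + 1 + 1) ^ (j + 1)
            ≤ Hnorm Λ (j + 1) ^ (2 * (j + 1)) := le_trans h1 h2
          _ = Hnorm Λ (j + 1) ^ j * Hnorm Λ (j + 1) ^ (j + 1 + 1) := by
              rw [← pow_add]; congr 1; omega
      exact le_of_mul_le_mul_left h3 (by positivity)
  have hR : ∀ t j, j + t = k → Hnorm Λ k ^ j ≤ Hnorm Λ j ^ k := by
    intro t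
    induction t with
    | zero => intro j hj; rw [show j = k from by omega]
    | succ t ih =>
      intro j hj
      have ihj := ih (j + 1) (by omega)
      have hq := hQ j (by omega)
      have pj : 0 < Hnorm Λ j := hpos _ (by omega)
      have pj1 : 0 < Hnorm Λ (j + 1) := hpos _ (by omega)
      have pk : 0 < Hnorm Λ k := hpos _ le_rfl
      have big : (Hnorm Λ k ^ j) ^ (j + 1) ≤ (Hnorm Λ j ^ k) ^ (j + 1) := by
        calc (Hnorm Λ k ^ j) ^ (j + 1) = (Hnorm Λ k ^ (j + 1)) ^ j := by
              rw [← pow_mul, ← pow_mul, Nat.mul_comm]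
          _ ≤ (Hnorm Λ (j + 1) ^ k) ^ j := pow_le_pow_left₀ (by positivity) ihj j
          _ = (Hnorm Λ (j + 1) ^ j) ^ k := by rw [← pow_mul, ← pow_mul, Nat.mul_comm]
          _ ≤ (Hnorm Λ j ^ (j + 1)) ^ k := pow_le_pow_left₀ (by positivity) hq k
          _ = (Hnorm Λ j ^ k) ^ (j + 1) := by rw [← pow_mul, ← pow_mul, Nat.mul_comm]
      exact (pow_le_pow_iff_left₀ (by positivity) (by positivity) (by omega)).mp big
  intro j hj1 hjk
  have pj : 0 < Hnorm Λ j := hpos _ hjk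
  have pk : 0 < Hnorm Λ k := hpos _ le_rfl
  have hb : Hnorm Λ k ^ j ≤ Hnorm Λ j ^ k := hR (k - j) j (by omega)
  rw [ge_iff_le]
  have hkne : (k : ℝ) ≠ 0 := Nat.cast_ne_zero.mpr (by omega)
  calc Hnorm Λ k ^ ((j : ℝ) / k) = (Hnorm Λ k ^ (j : ℕ)) ^ ((1 : ℝ) / k) := by
        rw [← Real.rpow_natCast (Hnorm Λ k) j, ← Real.rpow_mul pk.le]
        congr 1
        field_simp
    _ ≤ (Hnorm Λ j ^ (k : ℕ)) ^ ((1 : ℝ) / k) :=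
        Real.rpow_le_rpow (by positivity) hb (by positivity)
    _ = Hnorm Λ j := by
        rw [← Real.rpow_natCast (Hnorm Λ j) k, ← Real.rpow_mul pj.le]
        rw [mul_one_div, div_self hkne, Real.rpow_one]
end

section
/- If Λ ∈ ℝ^{n-1} has all entries positive and H_j(Λ) = H_k(Λ)^{j/k} for some 1 ≤ j < k ≤ n-1, then all entries of Λ are equal. -/
open Finset

open Polynomial

lemma esymmF_pos {m : ℕ} (Λ : Fin m → ℝ) (h : ∀ i, 0 < Λ i) {t : ℕ} (ht : t ≤ m) :
    0 < esymmF Λ t := by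
  unfold esymmF
  apply Finset.sum_pos
  · intro s _
    exact Finset.prod_pos fun i _ => h i
  · exact Finset.powersetCard_nonempty.2 (by simpa using ht)

lemma esymmF_zero {m : ℕ} (Λ : Fin m → ℝ) : esymmF Λ 0 = 1 := by
  simp [esymmF]

lemma esymmF_one {m : ℕ} (Λ : Fin m → ℝ) : esymmF Λ 1 = ∑ i, Λ i := by
  simp [esymmF, Finset.powersetCard_one, Finset.sum_map]

lemma esymm_two_aux {ι : Type*} [DecidableEq ι] (f : ι → ℝ) (s : Finset ι) :
    2 * ∑ t ∈ s.powersetCard 2, ∏ i ∈ t, f i = (∑ i ∈ s, f i)^2 - ∑ i ∈ s, (f i)^2 := by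
  induction s using Finset.induction_on with
  | empty =>
    rw [Finset.powersetCard_eq_empty.2 (by simp)]
    simp
  | @insert a s ha ih =>
    rw [Finset.powersetCard_succ_insert ha, Finset.sum_union, Finset.sum_image, Finset.sum_insert ha,
      Finset.sum_insert ha]
    · have h1 : ∀ t ∈ s.powersetCard 1, ∏ i ∈ insert a t, f i = f a * ∏ i ∈ t, f i := by
        intro t ht
        rw [Finset.mem_powersetCard] at ht
        rw [Finset.prod_insert (fun hc => ha (ht.1 hc))]
      rw [Finset.sum_congr rfl h1, ← Finset.mul_sum]
      have h2 : ∑ t ∈ s.powersetCard 1, ∏ i ∈ t, f i = ∑ i ∈ s, f i := by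
        simp [Finset.powersetCard_one, Finset.sum_map]
      rw [h2, mul_add, ih]
      ring
    · intro t ht u hu htu
      simp only [Finset.mem_coe, Finset.mem_powersetCard] at ht hu
      have : ∀ v : Finset ι, v ⊆ s → (insert a v).erase a = v := fun v hv => by
        rw [Finset.erase_insert (fun hc => ha (hv hc))]
      rw [← this t ht.1, ← this u hu.1, htu]
    · rw [Finset.disjoint_right]
      intro t htim hts
      rw [Finset.mem_image] at htim
      obtain ⟨u, hu, rfl⟩ := htim
      rw [Finset.mem_powersetCard] at hts hu
      exact ha (hts.1 (Finset.mem_insert_self a u))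

lemma two_mul_choose_two (m : ℕ) : 2 * m.choose 2 = m * (m - 1) := by
  induction m with
  | zero => simp
  | succ m ih =>
    rw [Nat.choose_succ_succ' m 1, Nat.mul_add, ih, Nat.choose_one_right]
    cases m <;> simp <;> ring

lemma equal_of_H1_sq_eq_H2 {m : ℕ} (hm : 2 ≤ m) (Λ : Fin m → ℝ)
    (h : Hnorm Λ 2 = (Hnorm Λ 1)^2) : ∀ i i', Λ i = Λ i' := by
  set S := ∑ i, Λ i with hS
  set T := ∑ i, (Λ i)^2 with hT
  have hσ2 : 2 * esymmF Λ 2 = S^2 - T := by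
    rw [show esymmF Λ 2 = ∑ t ∈ (univ : Finset (Fin m)).powersetCard 2, ∏ i ∈ t, Λ i from rfl,
      esymm_two_aux]
  have hc2 : (m.choose 2 : ℝ) * 2 = m * (m-1) := by
    have := two_mul_choose_two m
    have hcast : ((2 * m.choose 2 : ℕ) : ℝ) = ((m * (m-1) : ℕ) : ℝ) := by rw [this]
    push_cast [Nat.cast_sub (by omega : 1 ≤ m)] at hcast
    linarith
  have hm0 : (0:ℝ) < m := by
    have : (0:ℕ) < m := by omega
    exact_mod_cast this
  have hc2pos : (0:ℝ) < m.choose 2 := by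
    have : 0 < m.choose 2 := Nat.choose_pos hm
    exact_mod_cast this
  -- from h : esymmF 2 / C2 = (esymmF 1 / m)^2  derive m * T = S^2
  have hH : esymmF Λ 2 / (m.choose 2 : ℝ) = (S / m)^2 := by
    have e1 : esymmF Λ 1 = S := esymmF_one Λ
    have : Hnorm Λ 2 = (Hnorm Λ 1)^2 := h
    unfold Hnorm at this
    rw [e1] at this
    simpa [Nat.choose_one_right] using this
  have hmT : (m:ℝ) * T = S^2 := by
    have hx : esymmF Λ 2 * (m:ℝ)^2 = S^2 * (m.choose 2 : ℝ) := by
      field_simp at hH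
      linarith
    have hy : (S^2 - T) * (m:ℝ)^2 = S^2 * ((m:ℝ) * ((m:ℝ)-1)) := by
      have := hσ2
      nlinarith [hc2]
    have hm1 : (m:ℝ) ≠ 0 := ne_of_gt hm0
    nlinarith [hy]
  -- sum of squares
  have hsq : ∑ i : Fin m, ∑ i' : Fin m, (Λ i - Λ i')^2 = 2 * ((m:ℝ) * T - S^2) := by
    have : ∀ i : Fin m, ∑ i' : Fin m, (Λ i - Λ i')^2
        = (m:ℝ) * (Λ i)^2 - 2 * Λ i * S + T := by
      intro i
      have : ∑ i' : Fin m, (Λ i - Λ i')^2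
          = ∑ i' : Fin m, ((Λ i)^2 - 2 * Λ i * Λ i' + (Λ i')^2) := by
        apply Finset.sum_congr rfl; intros; ring
      rw [this, Finset.sum_add_distrib, Finset.sum_sub_distrib, Finset.sum_const,
        ← Finset.mul_sum, ← hS, ← hT]
      simp [Finset.card_univ, mul_comm]
    rw [Finset.sum_congr rfl (fun i _ => this i)]
    rw [Finset.sum_add_distrib, Finset.sum_sub_distrib, Finset.sum_const, ← Finset.mul_sum,
      ← Finset.sum_mul]
    simp only [← hT, ← hS, Finset.card_univ, Fintype.card_fin, smul_eq_mul]
    rw [show (∑ i : Fin m, 2 * Λ i) = 2 * S by rw [← Finset.mul_sum], nsmul_eq_mul]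
    ring
  have hzero : ∑ i : Fin m, ∑ i' : Fin m, (Λ i - Λ i')^2 = 0 := by
    rw [hsq, hmT]; ring
  intro i i'
  have h1 : ∀ a ∈ (univ : Finset (Fin m)), (0:ℝ) ≤ ∑ i' : Fin m, (Λ a - Λ i')^2 := by
    intro a _; exact Finset.sum_nonneg fun _ _ => sq_nonneg _
  have h2 := (Finset.sum_eq_zero_iff_of_nonneg h1).1 hzero i (Finset.mem_univ i)
  have h3 := (Finset.sum_eq_zero_iff_of_nonneg (fun a _ => sq_nonneg (Λ i - Λ a))).1 h2 i' (Finset.mem_univ i')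
  have := sq_eq_zero_iff.1 h3
  linarith


lemma descFactorial_cast_pos {n k : ℕ} (h : k ≤ n) : (0:ℝ) < (n.descFactorial k : ℝ) := by
  have : n.descFactorial k ≠ 0 := by
    intro h0
    exact absurd (Nat.descFactorial_eq_zero_iff_lt.1 h0) (by omega)
  exact_mod_cast Nat.pos_of_ne_zero this

lemma card_roots_iterate_derivative (p : Polynomial ℝ) (d : ℕ) :
    Multiset.card p.roots ≤ Multiset.card ((Polynomial.derivative)^[d] p).roots + d := by
  induction d with
  | zero => simp
  | succ d ih =>
    calc Multiset.card p.roots ≤ Multiset.card ((Polynomial.derivative)^[d] p).roots + d := ih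
    _ ≤ (Multiset.card ((Polynomial.derivative)^[d+1] p).roots + 1) + d := by
        rw [Function.iterate_succ_apply']
        exact Nat.add_le_add_right (Polynomial.card_roots_le_derivative _) d
    _ = Multiset.card ((Polynomial.derivative)^[d+1] p).roots + (d+1) := by ring

lemma reverse_multiset_prod (s : Multiset (Polynomial ℝ)) :
    s.prod.reverse = (s.map Polynomial.reverse).prod := by
  induction s using Multiset.induction_on with
  | empty =>
    simp only [Multiset.prod_zero, Multiset.map_zero]
    rw [show (1 : Polynomial ℝ) = Polynomial.C 1 by simp, Polynomial.reverse_C]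
  | cons a s ih =>
    rw [Multiset.prod_cons, Multiset.map_cons, Multiset.prod_cons,
      Polynomial.reverse_mul_of_domain, ih]

set_option maxHeartbeats 1000000 in
lemma newton_ineq {m j : ℕ} (hjm : j + 2 ≤ m) (Λ : Fin m → ℝ) (hpos : ∀ i, 0 < Λ i) :
    esymmF Λ j * esymmF Λ (j+2) * ((m.choose (j+1) : ℝ))^2 ≤
      (esymmF Λ (j+1))^2 * ((m.choose j : ℝ) * (m.choose (j+2) : ℝ)) := by
  classical
  set d := m - (j + 2) with hd
  have hmd : m = j + 2 + d := by omega
  set P : Polynomial ℝ := ∏ i : Fin m, (Polynomial.X + Polynomial.C (Λ i)) with hP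
  have hPm : P.Monic := Polynomial.monic_prod_of_monic _ _ fun i _ => Polynomial.monic_X_add_C _
  have hPdeg : P.natDegree = m := by
    rw [hP, Polynomial.natDegree_prod_of_monic _ _ fun i _ => Polynomial.monic_X_add_C _]
    simp [Polynomial.natDegree_X_add_C]
  have hcoeff : ∀ t, t ≤ m → P.coeff (m - t) = esymmF Λ t := by
    intro t ht
    rw [hP, Finset.prod_X_add_C_coeff _ _ (by simpa using Nat.sub_le m t)]
    simp only [Finset.card_univ, Fintype.card_fin, Nat.sub_sub_self ht]
    rfl
  have hProots : Multiset.card P.roots = m := by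
    have hfac : P = ((Finset.univ.val.map fun i => -Λ i).map fun r =>
        Polynomial.X - Polynomial.C r).prod := by
      rw [Multiset.map_map, hP, Finset.prod]
      congr 1
      apply Multiset.map_congr rfl
      intro i _
      simp [sub_neg_eq_add]
    rw [hfac, Polynomial.roots_multiset_prod_X_sub_C]
    simp
  set Q : Polynomial ℝ := (Polynomial.derivative)^[d] P with hQ
  have hQcoeff : ∀ t, Q.coeff t = ((t+d).descFactorial d : ℝ) * P.coeff (t+d) := by
    intro t
    rw [hQ, Polynomial.coeff_iterate_derivative, nsmul_eq_mul]
  have hQcoeffσ : ∀ t, t ≤ j + 2 → Q.coeff t = ((t+d).descFactorial d : ℝ) * esymmF Λ (j+2-t) := by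
    intro t ht
    rw [hQcoeff t, ← hcoeff (j+2-t) (by omega), show m - (j+2-t) = t + d by omega]
  have hQtop : Q.coeff (j+2) ≠ 0 := by
    rw [hQcoeff, show j + 2 + d = m from hmd.symm, ← hPdeg, hPm.coeff_natDegree]
    simp only [mul_one]
    exact (descFactorial_cast_pos (by omega)).ne'
  have hQdeg : Q.natDegree = j + 2 := by
    refine le_antisymm ?_ (Polynomial.le_natDegree_of_ne_zero hQtop)
    have := Polynomial.natDegree_iterate_derivative P d
    rw [← hQ, hPdeg] at this
    omega
  have hQ0pos : 0 < Q.coeff 0 := by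
    rw [hQcoeffσ 0 (by omega)]
    have := esymmF_pos Λ hpos (t := j+2) (by omega)
    have h2 : (0:ℝ) < ((0+d).descFactorial d : ℝ) := descFactorial_cast_pos (by omega)
    positivity
  have hQne : Q ≠ 0 := fun h => by simp [h] at hQ0pos
  have hQroots : Multiset.card Q.roots = j + 2 := by
    refine le_antisymm (hQdeg ▸ Polynomial.card_roots' Q) ?_
    have := card_roots_iterate_derivative P d
    rw [hProots, ← hQ] at this
    omega
  have hQr0 : ∀ r ∈ Q.roots, r ≠ 0 := by
    intro r hr hr0
    have := Polynomial.isRoot_of_mem_roots hr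
    rw [hr0, Polynomial.IsRoot, ← Polynomial.coeff_zero_eq_eval_zero] at this
    exact hQ0pos.ne' this
  set R : Polynomial ℝ := Q.reverse with hR
  have hRcoeff : ∀ s, s ≤ j + 2 → R.coeff s = Q.coeff (j + 2 - s) := by
    intro s hs
    rw [hR, Polynomial.coeff_reverse, hQdeg, Polynomial.revAt_le hs]
  have hRtop : R.coeff (j+2) ≠ 0 := by
    rw [hRcoeff (j+2) le_rfl, Nat.sub_self]
    exact hQ0pos.ne'
  have hRdeg : R.natDegree = j + 2 := by
    refine le_antisymm (le_trans (Polynomial.reverse_natDegree_le Q) hQdeg.le)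
      (Polynomial.le_natDegree_of_ne_zero hRtop)
  -- factor Q and compute roots of R
  have hQfac : Q = Polynomial.C Q.leadingCoeff *
      (Q.roots.map fun a => Polynomial.X - Polynomial.C a).prod :=
    (Polynomial.C_leadingCoeff_mul_prod_multiset_X_sub_C (hQroots.trans hQdeg.symm)).symm
  have hRroots : Multiset.card R.roots = j + 2 := by
    have hrev : R = Polynomial.C Q.leadingCoeff *
        (Q.roots.map fun a => (1 : Polynomial ℝ) - Polynomial.C a * Polynomial.X).prod := by
      conv_lhs => rw [hR, hQfac]
      rw [Polynomial.reverse_mul_of_domain, Polynomial.reverse_C, reverse_multiset_prod,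
        Multiset.map_map]
      congr 1
      apply congrArg
      apply Multiset.map_congr rfl
      intro a _
      show (Polynomial.X - Polynomial.C a).reverse = _
      have hX : (Polynomial.X : Polynomial ℝ).reverse = 1 := by
        rw [show (Polynomial.X : Polynomial ℝ) = Polynomial.C 1 * Polynomial.X by simp,
          Polynomial.reverse_mul_X, Polynomial.reverse_C, map_one]
      rw [sub_eq_add_neg, ← Polynomial.C_neg, Polynomial.reverse_add_C, hX,
        Polynomial.natDegree_X, pow_one, Polynomial.C_neg]
      ring
    -- rewrite factors as C(-a) * (X - C a⁻¹)
    have hrev2 : R = Polynomial.C Q.leadingCoeff *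
        (Q.roots.map fun a => Polynomial.C (-a) * (Polynomial.X - Polynomial.C a⁻¹)).prod := by
      rw [hrev]
      congr 1
      apply congrArg
      apply Multiset.map_congr rfl
      intro a ha
      have ha0 : a ≠ 0 := hQr0 a ha
      have : (Polynomial.C (-a)) * (Polynomial.X - Polynomial.C a⁻¹)
          = 1 - Polynomial.C a * Polynomial.X := by
        rw [mul_sub, ← Polynomial.C_mul, show -a * a⁻¹ = -(a * a⁻¹) by ring,
          mul_inv_cancel₀ ha0]
        simp only [Polynomial.C_neg, Polynomial.C_1]
        ring
      exact this.symm
    have hlc : Q.leadingCoeff ≠ 0 := Polynomial.leadingCoeff_ne_zero.2 hQne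
    rw [hrev2, Polynomial.roots_C_mul _ hlc, Polynomial.roots_multiset_prod, Multiset.bind_map]
    · have hcong : (Q.roots.bind fun a =>
          (Polynomial.C (-a) * (Polynomial.X - Polynomial.C a⁻¹)).roots)
          = Q.roots.bind (fun a => ({a⁻¹} : Multiset ℝ)) :=
        Multiset.bind_congr (fun a ha => by
          rw [Polynomial.roots_C_mul _ (neg_ne_zero.2 (hQr0 a ha)), Polynomial.roots_X_sub_C])
      rw [hcong, Multiset.bind_singleton, Multiset.card_map, hQroots]
    · intro hc
      rw [Multiset.mem_map] at hc
      obtain ⟨a, ha, hfa⟩ := hc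
      have := congrArg (Polynomial.eval (a⁻¹ + 1)) hfa
      simp only [Polynomial.eval_mul, Polynomial.eval_sub, Polynomial.eval_C, Polynomial.eval_X,
        Polynomial.eval_zero] at this
      have ha0 : a ≠ 0 := hQr0 a ha
      rcases mul_eq_zero.1 this with h | h
      · exact (neg_ne_zero.2 ha0) h
      · simp at h
  set S2 : Polynomial ℝ := (Polynomial.derivative)^[j] R with hS2
  have hScoeff : ∀ t, S2.coeff t = ((t+j).descFactorial j : ℝ) * R.coeff (t+j) := by
    intro t; rw [hS2, Polynomial.coeff_iterate_derivative, nsmul_eq_mul]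
  set ca : ℝ := ((j+2).descFactorial j : ℝ) * ((0+d).descFactorial d : ℝ) with hca_def
  set cb : ℝ := ((j+1).descFactorial j : ℝ) * ((1+d).descFactorial d : ℝ) with hcb_def
  set cc : ℝ := (j.descFactorial j : ℝ) * ((2+d).descFactorial d : ℝ) with hcc_def
  have hA : S2.coeff 2 = ca * esymmF Λ (j+2) := by
    rw [hScoeff, hRcoeff (2+j) (by omega), show j + 2 - (2+j) = 0 by omega,
      hQcoeffσ 0 (by omega), show j + 2 - 0 = j + 2 by omega, show 2 + j = j + 2 by omega,
      hca_def]
    ring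
  have hB : S2.coeff 1 = cb * esymmF Λ (j+1) := by
    rw [hScoeff, hRcoeff (1+j) (by omega), show j + 2 - (1+j) = 1 by omega,
      hQcoeffσ 1 (by omega), show j + 2 - 1 = j + 1 by omega, show 1 + j = j + 1 by omega,
      hcb_def]
    ring
  have hC : S2.coeff 0 = cc * esymmF Λ j := by
    rw [hScoeff, hRcoeff (0+j) (by omega), show j + 2 - (0+j) = 2 by omega,
      hQcoeffσ 2 (by omega), show j + 2 - 2 = j by omega, show 0 + j = j by omega,
      hcc_def]
    ring
  have hcapos : 0 < ca := mul_pos (descFactorial_cast_pos (by omega)) (descFactorial_cast_pos (by omega))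
  have hcbpos : 0 < cb := mul_pos (descFactorial_cast_pos (by omega)) (descFactorial_cast_pos (by omega))
  have hccpos : 0 < cc := mul_pos (descFactorial_cast_pos (by omega)) (descFactorial_cast_pos (by omega))
  have hσ2pos := esymmF_pos Λ hpos (t := j+2) (by omega)
  have hS2top : S2.coeff 2 ≠ 0 := by rw [hA]; positivity
  have hS2deg : S2.natDegree = 2 := by
    refine le_antisymm ?_ (Polynomial.le_natDegree_of_ne_zero hS2top)
    have := Polynomial.natDegree_iterate_derivative R j
    rw [← hS2, hRdeg] at this
    omega
  have hS2roots : 2 ≤ Multiset.card S2.roots := by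
    have := card_roots_iterate_derivative R j
    rw [hRroots, ← hS2] at this
    omega
  clear_value S2
  clear_value R
  clear_value Q
  clear_value P
  obtain ⟨x, hx⟩ := Multiset.card_pos_iff_exists_mem.1 (show 0 < Multiset.card S2.roots by omega)
  have hev : S2.eval x = 0 := Polynomial.isRoot_of_mem_roots hx
  have hquadeq : S2.coeff 2 * (x * x) + S2.coeff 1 * x + S2.coeff 0 = 0 := by
    rw [Polynomial.eval_eq_sum_range' (by omega : S2.natDegree < 3)] at hev
    simp only [Finset.sum_range_succ, Finset.sum_range_zero] at hev
    nlinarith [hev]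
  have hdisc := discrim_eq_sq_of_quadratic_eq_zero hquadeq
  rw [discrim] at hdisc
  have hquad : 4 * (S2.coeff 2) * (S2.coeff 0) ≤ (S2.coeff 1)^2 := by
    nlinarith [sq_nonneg (2 * S2.coeff 2 * x + S2.coeff 1)]
  -- the combinatorial identity
  have n1 : (j+1).descFactorial j = (j+1).factorial := by
    have := Nat.factorial_mul_descFactorial (show j ≤ j + 1 by omega)
    simpa using this
  have n2 : 2 * ((j+2).descFactorial j) = (j+2).factorial := by
    have := Nat.factorial_mul_descFactorial (show j ≤ j + 2 by omega)
    simpa [Nat.factorial] using this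
  have n3 : j.descFactorial j = j.factorial := Nat.descFactorial_self j
  have d1 : (1+d).descFactorial d = (d+1).factorial := by
    have := Nat.factorial_mul_descFactorial (show d ≤ d + 1 by omega)
    simpa [add_comm 1 d] using this
  have d2 : 2 * ((2+d).descFactorial d) = (d+2).factorial := by
    have := Nat.factorial_mul_descFactorial (show d ≤ d + 2 by omega)
    simpa [add_comm 2 d, Nat.factorial] using this
  have d3 : (0+d).descFactorial d = d.factorial := by
    simpa using Nat.descFactorial_self d
  have c1 : m.choose (j+1) * ((j+1).factorial * (d+1).factorial) = m.factorial := by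
    have := Nat.choose_mul_factorial_mul_factorial (show j + 1 ≤ m by omega)
    rw [show m - (j+1) = d + 1 by omega] at this
    rw [← this]; ring
  have c0 : m.choose j * (j.factorial * (d+2).factorial) = m.factorial := by
    have := Nat.choose_mul_factorial_mul_factorial (show j ≤ m by omega)
    rw [show m - j = d + 2 by omega] at this
    rw [← this]; ring
  have c2 : m.choose (j+2) * ((j+2).factorial * d.factorial) = m.factorial := by
    have := Nat.choose_mul_factorial_mul_factorial (show j + 2 ≤ m by omega)
    rw [show m - (j+2) = d by omega] at this
    rw [← this]; ring
  have hkey1 : cb * (m.choose (j+1) : ℝ) = (m.factorial : ℝ) := by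
    rw [hcb_def]
    have : (j+1).descFactorial j * ((1+d).descFactorial d) * m.choose (j+1) = m.factorial := by
      rw [n1, d1, ← c1]; ring
    exact_mod_cast congrArg (Nat.cast (R := ℝ)) this
  have hkey2 : 4 * ca * cc * ((m.choose j : ℝ) * (m.choose (j+2) : ℝ)) = (m.factorial : ℝ)^2 := by
    rw [hca_def, hcc_def]
    have : (4 * ((j+2).descFactorial j * ((0+d).descFactorial d)) *
        (j.descFactorial j * ((2+d).descFactorial d))) * (m.choose j * m.choose (j+2))
        = m.factorial * m.factorial := by
      calc (4 * ((j+2).descFactorial j * ((0+d).descFactorial d)) *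
          (j.descFactorial j * ((2+d).descFactorial d))) * (m.choose j * m.choose (j+2))
          = ((2 * ((j+2).descFactorial j)) * (2 * ((2+d).descFactorial d))) *
            ((j.descFactorial j * ((0+d).descFactorial d)) * (m.choose j * m.choose (j+2))) := by
            ring
        _ = ((j+2).factorial * (d+2).factorial) *
            ((j.factorial * d.factorial) * (m.choose j * m.choose (j+2))) := by
            rw [n2, d2, n3, d3]
        _ = (m.choose j * (j.factorial * (d+2).factorial)) *
            (m.choose (j+2) * ((j+2).factorial * d.factorial)) := by ring
        _ = m.factorial * m.factorial := by rw [c0, c2]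
    have hcast := congrArg (Nat.cast (R := ℝ)) this
    push_cast at hcast ⊢
    linarith
  have hkey : cb^2 * ((m.choose (j+1) : ℝ))^2 = 4 * ca * cc *
      ((m.choose j : ℝ) * (m.choose (j+2) : ℝ)) := by
    calc cb^2 * ((m.choose (j+1) : ℝ))^2 = (cb * (m.choose (j+1) : ℝ))^2 := by ring
      _ = ((m.factorial : ℝ))^2 := by rw [hkey1]
      _ = 4 * ca * cc * ((m.choose j : ℝ) * (m.choose (j+2) : ℝ)) := hkey2.symm
  -- put it together
  have h4pos : (0:ℝ) < 4 * ca * cc := by positivity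
  have hmain : esymmF Λ j * esymmF Λ (j+2) * ((m.choose (j+1) : ℝ))^2 * (4 * ca * cc) ≤
      (esymmF Λ (j+1))^2 * ((m.choose j : ℝ) * (m.choose (j+2) : ℝ)) * (4 * ca * cc) := by
    have e1 : esymmF Λ j * esymmF Λ (j+2) * ((m.choose (j+1) : ℝ))^2 * (4 * ca * cc)
        = (4 * (S2.coeff 2) * (S2.coeff 0)) * ((m.choose (j+1) : ℝ))^2 := by
      rw [hA, hC]; ring
    have e2 : (esymmF Λ (j+1))^2 * ((m.choose j : ℝ) * (m.choose (j+2) : ℝ)) * (4 * ca * cc)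
        = (S2.coeff 1)^2 * ((m.choose (j+1) : ℝ))^2 := by
      rw [hB]
      linear_combination (-(esymmF Λ (j+1))^2) * hkey
    rw [e1, e2]
    exact mul_le_mul_of_nonneg_right hquad (sq_nonneg _)
  exact le_of_mul_le_mul_right hmain h4pos


section Chain

variable (h : ℕ → ℝ) (m : ℕ)

lemma chainA (hpos : ∀ t, t ≤ m → 0 < h t) (h0 : h 0 = 1)
    (hnewton : ∀ j, j + 2 ≤ m → h j * h (j+2) ≤ h (j+1)^2) :
    ∀ i, 1 ≤ i → i + 1 ≤ m →
      (h (i+1))^i ≤ (h i)^(i+1) ∧ ((h (i+1))^i = (h i)^(i+1) → h 2 = (h 1)^2) := by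
  intro i
  induction i with
  | zero => omega
  | succ i ih =>
    intro _ him
    rcases Nat.eq_or_lt_of_le (show 1 ≤ i + 1 by omega) with hi1 | hi1
    · -- i = 0
      have : i = 0 := by omega
      subst this
      have hn := hnewton 0 (by omega)
      rw [h0, one_mul] at hn
      constructor
      · simpa using hn
      · intro he
        simpa using he
    · -- i ≥ 1
      have hi : 1 ≤ i := by omega
      obtain ⟨ihA, ihB⟩ := ih hi (by omega)
      have hn := hnewton i (by omega)
      have hp1 : 0 < h i := hpos i (by omega)
      have hp2 : 0 < h (i+1) := hpos (i+1) (by omega)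
      have hp3 : 0 < h (i+2) := hpos (i+2) (by omega)
      have k1 : (h i * h (i+2))^(i+1) ≤ ((h (i+1))^2)^(i+1) :=
        pow_le_pow_left₀ (by positivity) hn (i+1)
      have key : (h (i+2))^(i+1) * (h (i+1))^i ≤ (h (i+1))^(i+2) * (h (i+1))^i := by
        calc (h (i+2))^(i+1) * (h (i+1))^i
            ≤ (h (i+2))^(i+1) * (h i)^(i+1) := by
              exact mul_le_mul_of_nonneg_left ihA (by positivity)
          _ = (h i * h (i+2))^(i+1) := by rw [mul_pow]; ring
          _ ≤ ((h (i+1))^2)^(i+1) := k1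
          _ = (h (i+1))^(i+2) * (h (i+1))^i := by rw [← pow_mul, ← pow_add]; ring_nf
      constructor
      · exact le_of_mul_le_mul_right key (by positivity)
      · intro he
        by_contra hne
        have hlt : (h (i+1))^i < (h i)^(i+1) := lt_of_le_of_ne ihA (fun hc => hne (ihB hc))
        have strict : (h (i+2))^(i+1) * (h (i+1))^i < (h (i+1))^(i+2) * (h (i+1))^i := by
          calc (h (i+2))^(i+1) * (h (i+1))^i
              < (h (i+2))^(i+1) * (h i)^(i+1) :=
                mul_lt_mul_of_pos_left hlt (by positivity)
            _ = (h i * h (i+2))^(i+1) := by rw [mul_pow]; ring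
            _ ≤ ((h (i+1))^2)^(i+1) := k1
            _ = (h (i+1))^(i+2) * (h (i+1))^i := by rw [← pow_mul, ← pow_add]; ring_nf
        rw [he] at strict
        exact lt_irrefl _ strict

lemma chainB (hpos : ∀ t, t ≤ m → 0 < h t) (h0 : h 0 = 1)
    (hnewton : ∀ j, j + 2 ≤ m → h j * h (j+2) ≤ h (j+1)^2) :
    ∀ j k, 1 ≤ j → j ≤ k → k ≤ m →
      ((h k)^j ≤ (h j)^k ∧ ((h k)^j = (h j)^k → j < k → h 2 = (h 1)^2)) := by
  intro j k hj hjk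
  induction k, hjk using Nat.le_induction with
  | base => exact fun _ => ⟨le_refl _, fun _ hc => absurd hc (lt_irrefl j)⟩
  | succ k hk ih =>
    intro hkm
    obtain ⟨ihA, ihB⟩ := ih (by omega)
    have hAk := chainA h m hpos h0 hnewton k (by omega) (by omega)
    have hp1 : 0 < h j := hpos j (by omega)
    have hpk : 0 < h k := hpos k (by omega)
    have hpk1 : 0 < h (k+1) := hpos (k+1) (by omega)
    have c1 : ((h (k+1))^j)^k = ((h (k+1))^k)^j := by rw [← pow_mul, ← pow_mul]; ring_nf
    have c2 : ((h k)^(k+1))^j = ((h k)^j)^(k+1) := by rw [← pow_mul, ← pow_mul]; ring_nf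
    have c3 : ((h j)^k)^(k+1) = ((h j)^(k+1))^k := by rw [← pow_mul, ← pow_mul]; ring_nf
    have s1 : ((h (k+1))^k)^j ≤ ((h k)^(k+1))^j := pow_le_pow_left₀ (by positivity) hAk.1 j
    have s2 : ((h k)^j)^(k+1) ≤ ((h j)^k)^(k+1) := pow_le_pow_left₀ (by positivity) ihA (k+1)
    have main : ((h (k+1))^j)^k ≤ ((h j)^(k+1))^k := by
      calc ((h (k+1))^j)^k = ((h (k+1))^k)^j := c1
        _ ≤ ((h k)^(k+1))^j := s1
        _ = ((h k)^j)^(k+1) := c2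
        _ ≤ ((h j)^k)^(k+1) := s2
        _ = ((h j)^(k+1))^k := c3
    constructor
    · have := pow_le_pow_iff_left₀ (a := (h (k+1))^j) (b := (h j)^(k+1))
        (by positivity) (by positivity) (show k ≠ 0 by omega)
      exact this.1 main
    · intro he _
      -- equality propagates
      have heq2 : ((h (k+1))^k)^j = ((h k)^(k+1))^j := by
        refine le_antisymm s1 ?_
        by_contra hc
        push_neg at hc
        have : ((h (k+1))^j)^k < ((h j)^(k+1))^k := by
          calc ((h (k+1))^j)^k = ((h (k+1))^k)^j := c1
            _ < ((h k)^(k+1))^j := hc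
            _ = ((h k)^j)^(k+1) := c2
            _ ≤ ((h j)^k)^(k+1) := s2
            _ = ((h j)^(k+1))^k := c3
        rw [he] at this
        exact lt_irrefl _ this
      have heq3 : (h (k+1))^k = (h k)^(k+1) := by
        have h1 := (pow_le_pow_iff_left₀ (a := (h (k+1))^k) (b := (h k)^(k+1))
          (by positivity) (by positivity) (show j ≠ 0 by omega)).1 heq2.le
        have h2 := (pow_le_pow_iff_left₀ (a := (h k)^(k+1)) (b := (h (k+1))^k)
          (by positivity) (by positivity) (show j ≠ 0 by omega)).1 heq2.ge
        exact le_antisymm h1 h2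
      exact hAk.2 heq3

end Chain

theorem maclaurin_equality_case (n j k : ℕ) (hj : 1 ≤ j) (hjk : j < k) (hk : k ≤ n - 1)
    (Λ : Fin (n - 1) → ℝ) (hΛ : ∀ i, 0 < Λ i)
    (heq : Hnorm Λ j = (Hnorm Λ k) ^ ((j : ℝ) / k)) :
    ∀ i i', Λ i = Λ i' := by
  revert hk Λ
  generalize n - 1 = m
  intro hk Λ hΛ heq
  have hm : 2 ≤ m := by omega
  have hpos : ∀ t, t ≤ m → 0 < Hnorm Λ t := by
    intro t ht
    have h1 := esymmF_pos Λ hΛ ht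
    have h2 : (0:ℝ) < (m.choose t : ℝ) := by exact_mod_cast Nat.choose_pos ht
    exact div_pos h1 h2
  have h0 : Hnorm Λ 0 = 1 := by
    rw [Hnorm, esymmF_zero, Nat.choose_zero_right]
    norm_num
  have hnewton : ∀ t, t + 2 ≤ m → Hnorm Λ t * Hnorm Λ (t+2) ≤ (Hnorm Λ (t+1))^2 := by
    intro t htm
    have hni := newton_ineq htm Λ hΛ
    have c0 : (0:ℝ) < (m.choose t : ℝ) := by exact_mod_cast Nat.choose_pos (by omega)
    have c1 : (0:ℝ) < (m.choose (t+1) : ℝ) := by exact_mod_cast Nat.choose_pos (by omega)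
    have c2 : (0:ℝ) < (m.choose (t+2) : ℝ) := by exact_mod_cast Nat.choose_pos (by omega)
    rw [Hnorm, Hnorm, Hnorm, div_mul_div_comm, div_pow, div_le_div_iff₀ (by positivity) (by positivity)]
    calc esymmF Λ t * esymmF Λ (t+2) * ((m.choose (t+1) : ℝ))^2
        ≤ (esymmF Λ (t+1))^2 * ((m.choose t : ℝ) * (m.choose (t+2) : ℝ)) := hni
      _ = (esymmF Λ (t+1))^2 * ((m.choose t : ℝ) * (m.choose (t+2) : ℝ)) := rfl
  have hkR : ((k:ℝ)) ≠ 0 := by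
    have : 0 < k := by omega
    exact_mod_cast this.ne'
  have hHk : 0 < Hnorm Λ k := hpos k (by omega)
  have hpows : (Hnorm Λ j)^k = (Hnorm Λ k)^j := by
    have h1 : (Hnorm Λ j)^(k:ℕ) = ((Hnorm Λ k) ^ ((j:ℝ)/k))^(k:ℕ) := by rw [heq]
    rw [← Real.rpow_natCast ((Hnorm Λ k) ^ ((j:ℝ)/k)) k, ← Real.rpow_mul hHk.le,
      div_mul_cancel₀ _ hkR, Real.rpow_natCast] at h1
    exact h1
  have hchain := chainB (fun t => Hnorm Λ t) m hpos h0 hnewton j k hj (by omega) hk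
  have h2eq : Hnorm Λ 2 = (Hnorm Λ 1)^2 := hchain.2 hpows.symm hjk
  exact equal_of_H1_sq_eq_H2 hm Λ h2eq
end
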